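/- If t is a hereditarily defined term of the lambda calculus with constructors and ⌈t⌉ →* t', then cnf(t') = ⌈t₀⌉ for some term t₀ with t →* t₀. -/

import Mathlib

/- Terms of the lambda calculus with `n` constructors (de Bruijn indices).
`Ob n` plays the role of `Option (Tm n)`: a case-binding is a partial map
`Fin n → Ob n` from constructors to terms. -/
mutual
inductive Tm (n : ℕ) : Type where
  | var : ℕ → Tm n
  | app : Tm n → Tm n → Tm n
  | lam : Tm n → Tm n
  | cst : Fin n → Tm n
  | cas : (Fin n → Ob n) → Tm n → Tm n
inductive Ob (n : ℕ) : Type where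
  | none : Ob n
  | some : Tm n → Ob n
end

namespace LC

variable {n : ℕ}

/- Shift free de Bruijn indices `≥ k` by `d`. -/
mutual
def lift (d k : ℕ) : Tm n → Tm n
  | .var i => .var (if i < k then i else i + d)
  | .app t u => .app (lift d k t) (lift d k u)
  | .lam t => .lam (lift d (k+1) t)
  | .cst c => .cst c
  | .cas θ t => .cas (fun c => liftO d k (θ c)) (lift d k t)
def liftO (d k : ℕ) : Ob n → Ob n
  | .none => .none
  | .some t => .some (lift d k t)
end

/- Lift a case-binding (used for the CaseLam rule, where the bound variable
must not occur free in the binding). -/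
def liftB (θ : Fin n → Ob n) : Fin n → Ob n := fun c => liftO 1 0 (θ c)

/- Substitution of `u` for the variable `k` (capture-avoiding). -/
mutual
def subst (u : Tm n) (k : ℕ) : Tm n → Tm n
  | .var i => if i < k then .var i else if i = k then lift k 0 u else .var (i-1)
  | .app t v => .app (subst u k t) (subst u k v)
  | .lam t => .lam (subst u (k+1) t)
  | .cst c => .cst c
  | .cas θ t => .cas (fun c => substO u k (θ c)) (subst u k t)
def substO (u : Tm n) (k : ℕ) : Ob n → Ob n
  | .none => .none
  | .some t => .some (subst u k t)
end

/- `{θ}·(-)` applied inside an optional branch. -/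
def casO (θ : Fin n → Ob n) : Ob n → Ob n
  | .none => .none
  | .some u => .some (.cas θ u)

/- Composition of case-bindings: `(θ∘φ)(c) = {θ}·φ(c)` for `c ∈ dom φ`. -/
def compB (θ φ : Fin n → Ob n) : Fin n → Ob n := fun c => casO θ (φ c)

/- One-step reduction of the lambda calculus with constructors:
AppLam, LamApp, CaseCons, CaseApp, CaseLam, CaseCase, closed under all contexts. -/
inductive Step : Tm n → Tm n → Prop where
  | appLam (t u : Tm n) : Step (.app (.lam t) u) (subst u 0 t)
  | lamApp (t : Tm n) : Step (.lam (.app (lift 1 0 t) (.var 0))) t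
  | caseCons (θ : Fin n → Ob n) (c : Fin n) (u : Tm n) :
      θ c = .some u → Step (.cas θ (.cst c)) u
  | caseApp (θ : Fin n → Ob n) (t u : Tm n) :
      Step (.cas θ (.app t u)) (.app (.cas θ t) u)
  | caseLam (θ : Fin n → Ob n) (t : Tm n) :
      Step (.cas θ (.lam t)) (.lam (.cas (liftB θ) t))
  | caseCase (θ φ : Fin n → Ob n) (t : Tm n) :
      Step (.cas θ (.cas φ t)) (.cas (compB θ φ) t)
  | appL {t t' : Tm n} (u : Tm n) : Step t t' → Step (.app t u) (.app t' u)
  | appR (t : Tm n) {u u' : Tm n} : Step u u' → Step (.app t u) (.app t u')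
  | lamC {t t' : Tm n} : Step t t' → Step (.lam t) (.lam t')
  | casT (θ : Fin n → Ob n) {t t' : Tm n} : Step t t' → Step (.cas θ t) (.cas θ t')
  | casB (θ : Fin n → Ob n) (c : Fin n) {u u' : Tm n} (t : Tm n) :
      θ c = .some u → Step u u' →
      Step (.cas θ t) (.cas (Function.update θ c (.some u')) t)

/- One-step reduction by the CaseCase rule only (closed under all contexts). -/
inductive StepCC : Tm n → Tm n → Prop where
  | caseCase (θ φ : Fin n → Ob n) (t : Tm n) :
      StepCC (.cas θ (.cas φ t)) (.cas (compB θ φ) t)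
  | appL {t t' : Tm n} (u : Tm n) : StepCC t t' → StepCC (.app t u) (.app t' u)
  | appR (t : Tm n) {u u' : Tm n} : StepCC u u' → StepCC (.app t u) (.app t u')
  | lamC {t t' : Tm n} : StepCC t t' → StepCC (.lam t) (.lam t')
  | casT (θ : Fin n → Ob n) {t t' : Tm n} : StepCC t t' → StepCC (.cas θ t) (.cas θ t')
  | casB (θ : Fin n → Ob n) (c : Fin n) {u u' : Tm n} (t : Tm n) :
      θ c = .some u → StepCC u u' →
      StepCC (.cas θ t) (.cas (Function.update θ c (.some u')) t)

/- One-step reduction λC⁻ : every rule except CaseCase (closed under all contexts). -/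
inductive StepM : Tm n → Tm n → Prop where
  | appLam (t u : Tm n) : StepM (.app (.lam t) u) (subst u 0 t)
  | lamApp (t : Tm n) : StepM (.lam (.app (lift 1 0 t) (.var 0))) t
  | caseCons (θ : Fin n → Ob n) (c : Fin n) (u : Tm n) :
      θ c = .some u → StepM (.cas θ (.cst c)) u
  | caseApp (θ : Fin n → Ob n) (t u : Tm n) :
      StepM (.cas θ (.app t u)) (.app (.cas θ t) u)
  | caseLam (θ : Fin n → Ob n) (t : Tm n) :
      StepM (.cas θ (.lam t)) (.lam (.cas (liftB θ) t))
  | appL {t t' : Tm n} (u : Tm n) : StepM t t' → StepM (.app t u) (.app t' u)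
  | appR (t : Tm n) {u u' : Tm n} : StepM u u' → StepM (.app t u) (.app t u')
  | lamC {t t' : Tm n} : StepM t t' → StepM (.lam t) (.lam t')
  | casT (θ : Fin n → Ob n) {t t' : Tm n} : StepM t t' → StepM (.cas θ t) (.cas θ t')
  | casB (θ : Fin n → Ob n) (c : Fin n) {u u' : Tm n} (t : Tm n) :
      θ c = .some u → StepM u u' →
      StepM (.cas θ t) (.cas (Function.update θ c (.some u')) t)

/- A term is defined when none of its subterms is a match failure `{θ}·c` with
`c ∉ dom θ`. -/
inductive Defined : Tm n → Prop where
  | var (i : ℕ) : Defined (.var i)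
  | cst (c : Fin n) : Defined (.cst c)
  | app {t u : Tm n} : Defined t → Defined u → Defined (.app t u)
  | lam {t : Tm n} : Defined t → Defined (.lam t)
  | cas {θ : Fin n → Ob n} {t : Tm n} :
      (∀ c u, θ c = .some u → Defined u) → Defined t →
      (∀ c, t = .cst c → θ c ≠ .none) → Defined (.cas θ t)

/- Hereditarily defined: every reduct (in any number of steps) is defined. -/
def HD (t : Tm n) : Prop := ∀ u, Relation.ReflTransGen Step t u → Defined u

section Completion
variable [NeZero n]

/- The canonical match failure `{}·c₁` used to fill missing branches. -/
def failTm : Tm n := .cas (fun _ => .none) (.cst 0)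

/- Case-completion: replace every case-binding by its total completion,
filling each missing branch with `{}·c₁`. -/
mutual
def cpl : Tm n → Tm n
  | .var i => .var i
  | .app t u => .app (cpl t) (cpl u)
  | .lam t => .lam (cpl t)
  | .cst c => .cst c
  | .cas θ t => .cas (fun c => .some (cplO (θ c))) (cpl t)
def cplO : Ob n → Tm n
  | .none => failTm
  | .some u => cpl u
end

end Completion

/- The structural measure μ. -/
mutual
def mes : Tm n → ℕ
  | .var _ => 1
  | .cst _ => 1
  | .lam t => mes t + 1
  | .app t u => mes t + mes u
  | .cas θ t => mes t * ((∑ c : Fin n, mesO (θ c)) + 2)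
def mesO : Ob n → ℕ
  | .none => 0
  | .some t => mes t
end

end LC

/-!
Relate each reduct `x` of `⌈t⌉` to a reduct `T` of `t` by a simulation `x ∼ T`: `x` is `⌈T⌉`,
except that the filler of each branch missing in `T` may be any *dead* term, i.e. a stack of
case-bindings over `{}·c₁`. Dead terms are closed under lifting, substitution and reduction, so
every step of `x` is matched by reduction of `T`. The only step that could escape is a CaseCons
step of `x` selecting a filled branch; it would expose a match failure in `T`, which hereditary
definedness excludes. Finally the only CaseCase-normal dead term is `{}·c₁` itself, so a
CaseCase-normal `x ∼ T` is exactly `⌈T⌉`.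
-/

namespace LC

open Relation Function

variable {n : ℕ}

theorem StepCC.toStep {x y : Tm n} (h : StepCC x y) : Step x y := by
  induction h with
  | caseCase θ φ t => exact .caseCase θ φ t
  | appL u _ ih => exact .appL u ih
  | appR t _ ih => exact .appR t ih
  | lamC _ ih => exact .lamC ih
  | casT θ _ ih => exact .casT θ ih
  | casB θ c t hc _ ih => exact .casB θ c t hc ih

theorem steps_appL {t t' : Tm n} (u : Tm n) (h : ReflTransGen Step t t') :
    ReflTransGen Step (.app t u) (.app t' u) :=
  h.lift (Tm.app · u) fun _ _ ↦ .appL u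

theorem steps_appR (t : Tm n) {u u' : Tm n} (h : ReflTransGen Step u u') :
    ReflTransGen Step (.app t u) (.app t u') :=
  h.lift (Tm.app t) fun _ _ ↦ .appR t

theorem steps_lam {t t' : Tm n} (h : ReflTransGen Step t t') :
    ReflTransGen Step (.lam t) (.lam t') :=
  h.lift Tm.lam fun _ _ ↦ .lamC

theorem steps_casT (θ : Fin n → Ob n) {t t' : Tm n} (h : ReflTransGen Step t t') :
    ReflTransGen Step (.cas θ t) (.cas θ t') :=
  h.lift (Tm.cas θ) fun _ _ ↦ .casT θ

theorem steps_casB (t : Tm n) {θ : Fin n → Ob n} {c : Fin n} {u u' : Tm n}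
    (hc : θ c = .some u) (h : ReflTransGen Step u u') :
    ReflTransGen Step (.cas θ t) (.cas (update θ c (.some u')) t) := by
  induction h with
  | refl => rw [← hc, update_eq_self]
  | tail _ hstep ih =>
    refine ih.tail ?_
    simpa only [update_idem] using Step.casB _ c t (update_self c _ θ) hstep

theorem eq_cst_of_lift_eq_cst {d k : ℕ} {c : Fin n} :
    ∀ {t : Tm n}, lift d k t = .cst c → t = .cst c
  | .var _, h | .app _ _, h | .lam _, h | .cas _ _, h => by simp only [lift] at h; cases h
  | .cst _, h => by simpa only [lift] using h

theorem eq_none_of_liftO_eq_none {d k : ℕ} : ∀ {b : Ob n}, liftO d k b = .none → b = .none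
  | .none, _ => rfl
  | .some _, h => by simp only [liftO] at h; cases h

section Simulation

variable [NeZero n]

/- The terms `{θₖ}·…·{θ₁}·({}·c₁)`: what a missing branch of `t` can become in a reduct of
`⌈t⌉`. -/
inductive Dead : Tm n → Prop where
  | fail : Dead (.cas (fun _ => .none) (.cst 0))
  | cons (θ : Fin n → Ob n) {t : Tm n} : Dead t → Dead (.cas θ t)

theorem dead_lift {t : Tm n} (h : Dead t) (d k : ℕ) : Dead (lift d k t) := by
  induction h with
  | fail => exact .fail
  | cons _ _ ih => exact .cons _ ih

theorem dead_subst {t : Tm n} (h : Dead t) (u : Tm n) (k : ℕ) : Dead (subst u k t) := by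
  induction h with
  | fail => exact .fail
  | cons _ _ ih => exact .cons _ ih

theorem dead_cas_inv {θ : Fin n → Ob n} {t : Tm n} (h : Dead (.cas θ t)) :
    (θ = fun _ ↦ .none) ∧ t = .cst 0 ∨ Dead t := by
  cases h with
  | fail => exact .inl ⟨rfl, rfl⟩
  | cons _ hd => exact .inr hd

theorem dead_of_dead_lift {d k : ℕ} : ∀ {t : Tm n}, Dead (lift d k t) → Dead t
  | .var _, h | .app _ _, h | .lam _, h | .cst _, h => by simp only [lift] at h; cases h
  | .cas θ t, h => by
    simp only [lift] at h
    rcases dead_cas_inv h with ⟨hθ, ht⟩ | hd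
    · obtain rfl : θ = fun _ ↦ .none := funext fun c ↦ eq_none_of_liftO_eq_none (congrFun hθ c)
      obtain rfl := eq_cst_of_lift_eq_cst ht
      exact .fail
    · exact .cons _ (dead_of_dead_lift hd)

theorem dead_step {x x' : Tm n} (h : Step x x') (hd : Dead x) : Dead x' := by
  induction h with
  | appLam | lamApp | appL | appR | lamC => cases hd
  | caseApp | caseLam => cases hd with | cons _ hd => cases hd
  | caseCons θ c u hc =>
    cases hd with
    | fail => cases hc
    | cons _ hd => cases hd
  | caseCase =>
    cases hd with
    | cons _ hd =>
      cases hd with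
      | fail => exact .fail
      | cons _ hd => exact .cons _ hd
  | casT θ hstep ih =>
    cases hd with
    | fail => cases hstep
    | cons _ hd => exact .cons _ (ih hd)
  | casB θ c t hc =>
    cases hd with
    | fail => cases hc
    | cons _ hd => exact .cons _ hd

theorem dead_eq_failTm {t : Tm n} (hd : Dead t) (hnf : ∀ v, ¬ StepCC t v) : t = failTm := by
  cases hd with
  | fail => rfl
  | cons _ hd => cases hd <;> exact (hnf _ (.caseCase _ _ _)).elim

/- `Sim x T`: `x` is `⌈T⌉` up to replacing the filler `{}·c₁` of missing branches by dead
terms. -/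
mutual
inductive Sim : Tm n → Tm n → Prop where
  | var (i : ℕ) : Sim (.var i) (.var i)
  | cst (c : Fin n) : Sim (.cst c) (.cst c)
  | app {x X y Y : Tm n} : Sim x X → Sim y Y → Sim (.app x y) (.app X Y)
  | lam {x X : Tm n} : Sim x X → Sim (.lam x) (.lam X)
  | cas {θ Θ : Fin n → Ob n} {x X : Tm n} :
      (∀ c, SimO (θ c) (Θ c)) → Sim x X → Sim (.cas θ x) (.cas Θ X)
inductive SimO : Ob n → Ob n → Prop where
  | dead {v : Tm n} : Dead v → SimO (.some v) .none
  | some {v V : Tm n} : Sim v V → SimO (.some v) (.some V)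
end

theorem simO_some_inv {v : Tm n} {B : Ob n} (h : SimO (.some v) B) :
    B = .none ∧ Dead v ∨ ∃ V, B = .some V ∧ Sim v V := by
  cases h with
  | dead hd => exact .inl ⟨rfl, hd⟩
  | some h => exact .inr ⟨_, rfl, h⟩

theorem simO_casO {θ Θ : Fin n → Ob n} (hθ : ∀ c, SimO (θ c) (Θ c)) {b B : Ob n} :
    SimO b B → SimO (casO θ b) (casO Θ B)
  | .dead hd => .dead (.cons θ hd)
  | .some h => .some (.cas hθ h)

theorem simO_update {θ Θ : Fin n → Ob n} (hθ : ∀ c, SimO (θ c) (Θ c)) (c : Fin n)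
    {b B : Ob n} (h : SimO b B) (c' : Fin n) : SimO (update θ c b c') (update Θ c B c') := by
  by_cases hc : c' = c
  · subst hc
    simpa only [update_self] using h
  · simpa only [update_of_ne hc] using hθ c'

mutual
theorem sim_cpl : ∀ t : Tm n, Sim (cpl t) t
  | .var i => .var i
  | .cst c => .cst c
  | .app t u => .app (sim_cpl t) (sim_cpl u)
  | .lam t => .lam (sim_cpl t)
  | .cas θ t => .cas (fun c ↦ simO_cplO (θ c)) (sim_cpl t)
theorem simO_cplO : ∀ b : Ob n, SimO (.some (cplO b)) b
  | .none => .dead .fail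
  | .some v => .some (sim_cpl v)
end

mutual
theorem sim_lift (d : ℕ) : ∀ (k : ℕ) {x X : Tm n}, Sim x X → Sim (lift d k x) (lift d k X)
  | _, _, _, .var _ => .var _
  | _, _, _, .cst _ => .cst _
  | k, _, _, .app h₁ h₂ => .app (sim_lift d k h₁) (sim_lift d k h₂)
  | k, _, _, .lam h => .lam (sim_lift d (k + 1) h)
  | k, _, _, .cas hθ h => .cas (fun c ↦ simO_liftO d k (hθ c)) (sim_lift d k h)
theorem simO_liftO (d : ℕ) :
    ∀ (k : ℕ) {b B : Ob n}, SimO b B → SimO (liftO d k b) (liftO d k B)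
  | k, _, _, .dead hd => .dead (dead_lift hd d k)
  | k, _, _, .some h => .some (sim_lift d k h)
end

mutual
theorem sim_subst {u U : Tm n} (hu : Sim u U) :
    ∀ (k : ℕ) {x X : Tm n}, Sim x X → Sim (subst u k x) (subst U k X)
  | k, _, _, .var i => by
    simp only [subst]
    split_ifs
    · exact .var i
    · exact sim_lift k 0 hu
    · exact .var (i - 1)
  | _, _, _, .cst _ => .cst _
  | k, _, _, .app h₁ h₂ => .app (sim_subst hu k h₁) (sim_subst hu k h₂)
  | k, _, _, .lam h => .lam (sim_subst hu (k + 1) h)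
  | k, _, _, .cas hθ h => .cas (fun c ↦ simO_substO hu k (hθ c)) (sim_subst hu k h)
theorem simO_substO {u U : Tm n} (hu : Sim u U) :
    ∀ (k : ℕ) {b B : Ob n}, SimO b B → SimO (substO u k b) (substO U k B)
  | k, _, _, .dead hd => .dead (dead_subst hd u k)
  | k, _, _, .some h => .some (sim_subst hu k h)
end

mutual
theorem exists_sim_of_sim_lift (d : ℕ) :
    ∀ (k : ℕ) (x : Tm n) {X : Tm n}, Sim (lift d k x) X → ∃ X₀, X = lift d k X₀ ∧ Sim x X₀
  | _, .var i, _, .var _ => ⟨.var i, rfl, .var i⟩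
  | _, .cst c, _, .cst _ => ⟨.cst c, rfl, .cst c⟩
  | k, .app x y, _, .app h₁ h₂ => by
    obtain ⟨X, rfl, hX⟩ := exists_sim_of_sim_lift d k x h₁
    obtain ⟨Y, rfl, hY⟩ := exists_sim_of_sim_lift d k y h₂
    exact ⟨.app X Y, rfl, .app hX hY⟩
  | k, .lam x, _, .lam h => by
    obtain ⟨X, rfl, hX⟩ := exists_sim_of_sim_lift d (k + 1) x h
    exact ⟨.lam X, rfl, .lam hX⟩
  | k, .cas θ x, _, .cas hθ h => by
    obtain ⟨X, rfl, hX⟩ := exists_sim_of_sim_lift d k x h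
    choose Θ hΘ hsim using fun c ↦ exists_simO_of_simO_liftO d k (θ c) (hθ c)
    exact ⟨.cas Θ X, by simp only [lift, ← hΘ], .cas hsim hX⟩
theorem exists_simO_of_simO_liftO (d : ℕ) :
    ∀ (k : ℕ) (b : Ob n) {B : Ob n}, SimO (liftO d k b) B → ∃ B₀, B = liftO d k B₀ ∧ SimO b B₀
  | _, .some _, _, .dead hd => ⟨.none, rfl, .dead (dead_of_dead_lift hd)⟩
  | k, .some v, _, .some h => by
    obtain ⟨V, rfl, hV⟩ := exists_sim_of_sim_lift d k v h
    exact ⟨.some V, rfl, .some hV⟩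
end

theorem sim_caseCons {θ Θ : Fin n → Ob n} {c : Fin n} {u : Tm n} (hc : θ c = .some u)
    (hθ : ∀ c, SimO (θ c) (Θ c)) (hT : Defined (.cas Θ (.cst c))) :
    ∃ U, Step (.cas Θ (.cst c)) U ∧ Sim u U := by
  have hsim := hθ c
  rw [hc] at hsim
  rcases simO_some_inv hsim with ⟨hnone, -⟩ | ⟨U, hU, hsim⟩
  · cases hT with
    | cas _ _ hfail => exact (hfail c rfl hnone).elim
  · exact ⟨U, .caseCons _ c U hU, hsim⟩

/- A step inside a branch: a filler stays dead and `T` does not move, a branch of `T` follows. -/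
theorem sim_casB {θ Θ : Fin n → Ob n} {c : Fin n} {u u' t T : Tm n} (hc : θ c = .some u)
    (hstep : Step u u')
    (ih : ∀ {U : Tm n}, Sim u U → Defined U → ∃ U', ReflTransGen Step U U' ∧ Sim u' U')
    (hθ : ∀ c, SimO (θ c) (Θ c)) (ht : Sim t T) (hdef : ∀ c U, Θ c = .some U → Defined U) :
    ∃ T', ReflTransGen Step (.cas Θ T) T' ∧ Sim (.cas (update θ c (.some u')) t) T' := by
  have hsim := hθ c
  rw [hc] at hsim
  rcases simO_some_inv hsim with ⟨hnone, hdead⟩ | ⟨U, hU, hsim⟩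
  · have hθ' := simO_update hθ c (.dead (dead_step hstep hdead))
    rw [← hnone, update_eq_self] at hθ'
    exact ⟨_, .refl, .cas hθ' ht⟩
  · obtain ⟨U', hr, hsim'⟩ := ih hsim (hdef c U hU)
    exact ⟨_, steps_casB _ hU hr, .cas (simO_update hθ c (.some hsim')) ht⟩

theorem sim_step {x x' : Tm n} (h : Step x x') :
    ∀ {T : Tm n}, Sim x T → Defined T → ∃ T', ReflTransGen Step T T' ∧ Sim x' T' := by
  induction h with
  | appLam => exact fun | .app (.lam ht) hu, _ => ⟨_, .single (.appLam _ _), sim_subst hu 0 ht⟩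
  | lamApp t =>
    refine fun | .lam (.app hlift (.var _)), _ => ?_
    obtain ⟨X, rfl, hX⟩ := exists_sim_of_sim_lift 1 0 t hlift
    exact ⟨X, .single (.lamApp X), hX⟩
  | caseCons _ _ _ hc =>
    refine fun | .cas hθ (.cst _), hT => ?_
    obtain ⟨U, hstep, hU⟩ := sim_caseCons hc hθ hT
    exact ⟨U, .single hstep, hU⟩
  | caseApp =>
    exact fun | .cas hθ (.app ht hu), _ => ⟨_, .single (.caseApp _ _ _), .app (.cas hθ ht) hu⟩
  | caseLam =>
    exact fun
      | .cas hθ (.lam ht), _ =>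
        ⟨_, .single (.caseLam _ _), .lam (.cas (fun c ↦ simO_liftO 1 0 (hθ c)) ht)⟩
  | caseCase =>
    exact fun
      | .cas hθ (.cas hφ ht), _ =>
        ⟨_, .single (.caseCase _ _ _), .cas (fun c ↦ simO_casO hθ (hφ c)) ht⟩
  | appL _ _ ih =>
    refine fun | .app ht hu, .app hT _ => ?_
    obtain ⟨_, hr, ht'⟩ := ih ht hT
    exact ⟨_, steps_appL _ hr, .app ht' hu⟩
  | appR _ _ ih =>
    refine fun | .app ht hu, .app _ hU => ?_
    obtain ⟨_, hr, hu'⟩ := ih hu hU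
    exact ⟨_, steps_appR _ hr, .app ht hu'⟩
  | lamC _ ih =>
    refine fun | .lam ht, .lam hT => ?_
    obtain ⟨_, hr, ht'⟩ := ih ht hT
    exact ⟨_, steps_lam hr, .lam ht'⟩
  | casT _ _ ih =>
    refine fun | .cas hθ ht, .cas _ hT _ => ?_
    obtain ⟨_, hr, ht'⟩ := ih ht hT
    exact ⟨_, steps_casT _ hr, .cas hθ ht'⟩
  | casB _ _ _ hc hstep ih =>
    exact fun | .cas hθ ht, .cas hdef _ _ => sim_casB hc hstep ih hθ ht hdef

theorem sim_steps {x x' T : Tm n} (h : ReflTransGen Step x x') (hx : Sim x T) (hT : HD T) :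
    ∃ T', ReflTransGen Step T T' ∧ Sim x' T' := by
  induction h with
  | refl => exact ⟨T, .refl, hx⟩
  | tail _ hstep ih =>
    obtain ⟨T₁, hr₁, hsim₁⟩ := ih
    obtain ⟨T₂, hr₂, hsim₂⟩ := sim_step hstep hsim₁ (hT T₁ hr₁)
    exact ⟨T₂, hr₁.trans hr₂, hsim₂⟩

mutual
theorem eq_cpl_of_sim : ∀ {x T : Tm n}, Sim x T → (∀ v, ¬ StepCC x v) → x = cpl T
  | _, _, .var _, _ | _, _, .cst _, _ => rfl
  | _, _, .app h₁ h₂, hnf => by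
    rw [cpl, eq_cpl_of_sim h₁ fun _ h ↦ hnf _ (.appL _ h),
      eq_cpl_of_sim h₂ fun _ h ↦ hnf _ (.appR _ h)]
  | _, _, .lam h, hnf => by rw [cpl, eq_cpl_of_sim h fun _ h ↦ hnf _ (.lamC h)]
  | _, _, @Sim.cas _ _ θ _ x _ hθ h, hnf => by
    rw [cpl, eq_cpl_of_sim h fun _ h ↦ hnf _ (.casT _ h)]
    congr 1
    funext c
    exact eq_some_cplO_of_simO (hθ c) fun _ _ hc h ↦ hnf _ (.casB θ c x hc h)
theorem eq_some_cplO_of_simO :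
    ∀ {b B : Ob n}, SimO b B → (∀ w v, b = .some w → ¬ StepCC w v) → b = .some (cplO B)
  | _, _, .dead hd, hnf => by rw [cplO, dead_eq_failTm hd fun v ↦ hnf _ v rfl]
  | _, _, .some h, hnf => by rw [cplO, eq_cpl_of_sim h fun v ↦ hnf _ v rfl]
end

end Simulation

/-- If `t` is hereditarily defined and `⌈t⌉ →* t'`, then the CaseCase normal
form of `t'` is `⌈t₀⌉` for some `t₀` with `t →* t₀`. -/
theorem cpl_red_hd {n : ℕ} [NeZero n] {t t' a : Tm n} (ht : HD t)
    (h : Relation.ReflTransGen Step (cpl t) t')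
    (ha : Relation.ReflTransGen StepCC t' a) (hna : ∀ v, ¬ StepCC a v) :
    ∃ t₀ : Tm n, a = cpl t₀ ∧ Relation.ReflTransGen Step t t₀ := by
  have hred : ReflTransGen Step (cpl t) a :=
    h.trans (ReflTransGen.mono (fun _ _ ↦ StepCC.toStep) _ _ ha)
  obtain ⟨t₀, hr, hsim⟩ := sim_steps hred (sim_cpl t) ht
  exact ⟨t₀, eq_cpl_of_sim hsim hna, hr⟩

end LC
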